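/- Let q : ℕ → [0,1] be a probability mass function with q(n) ~ C/n² as n → ∞ (C > 0), and let u(n) := ∑_{k≥0} q^{*k}(n) be the renewal mass function. Then ∑_{0 ≤ i ≤ N/2 ≤ j ≤ N+1, j - i ≥ N/log N} u(i) q(j-i) u(N+1-j) / u(N+1) → 0 as N → ∞, given u(n) ~ 1/(C log n). -/

import Mathlib

/-!
Split the pairs `(i, j)` according to whether both `i` and `N + 1 - j` are at least `√N`.
If they are, `u(n) log n ≤ A` gives `u(i) u(N+1-j) ≤ (2A / log N)²`; and since at most `d + 1`
pairs straddling `N/2` have gap `j - i = d`, the `q`-mass of all gaps `≥ N / log N` is at most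
`∑_{N/log N ≤ d ≤ N+1} (d + 1) K / d² = O(log log N)`, where `d² q(d) ≤ K`. The remaining
`O(N^{3/2})` pairs carry `q(j - i) ≤ K (log N / N)²` and bounded `u`-factors. Altogether the
numerator is `O(log log N / log² N + log² N / √N) = o(1 / log N)`, while
`u(N + 1) log (N + 1) → 1 / C`.
-/

open Filter

/-- Discrete convolution on `ℕ`. -/
noncomputable def nconv (f g : ℕ → ℝ) : ℕ → ℝ :=
  fun n => ∑ m ∈ Finset.range (n + 1), f m * g (n - m)

/-- `k`-fold convolution power of `f`, with `f^{*0} = δ₀`. -/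
noncomputable def convPow (f : ℕ → ℝ) : ℕ → ℕ → ℝ
  | 0 => fun n => if n = 0 then 1 else 0
  | (k + 1) => nconv f (convPow f k)

open Finset Real Topology

lemma convPow_nonneg {q : ℕ → ℝ} (hq0 : ∀ n, 0 ≤ q n) (k n : ℕ) : 0 ≤ convPow q k n := by
  induction k generalizing n with
  | zero => simp only [convPow]; positivity
  | succ k ih =>
    simp only [convPow, nconv]
    exact sum_nonneg fun m _ => mul_nonneg (hq0 m) (ih (n - m))

lemma sum_sub_le_sum_image_succ_mul {g : ℕ → ℝ} (hg : ∀ d, 0 ≤ g d) {x : ℝ} {F : Finset (ℕ × ℕ)}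
    (hF : ∀ p ∈ F, (p.1 : ℝ) ≤ x ∧ x ≤ p.2) :
    ∑ p ∈ F, g (p.2 - p.1) ≤ ∑ d ∈ F.image (fun p : ℕ × ℕ => p.2 - p.1), ((d : ℝ) + 1) * g d := by
  rw [sum_comp]
  refine sum_le_sum fun d _ => ?_
  have hle : ∀ p ∈ F, p.1 ≤ p.2 := fun p hp => by exact_mod_cast (hF p hp).1.trans (hF p hp).2
  have hcard : #{p ∈ F | p.2 - p.1 = d} ≤ #(Icc ⌈x⌉₊ (⌈x⌉₊ + d)) := by
    refine card_le_card_of_injOn Prod.snd (fun p hp => ?_) (fun p hp p' hp' h => ?_)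
    · simp only [coe_filter, Set.mem_ofPred_eq] at hp
      have h1 : p.1 ≤ ⌈x⌉₊ := by exact_mod_cast (hF p hp.1).1.trans (Nat.le_ceil x)
      have h2 : ⌈x⌉₊ ≤ p.2 := Nat.ceil_le.2 (hF p hp.1).2
      simp only [coe_Icc, Set.mem_Icc]
      omega
    · simp only [coe_filter, Set.mem_ofPred_eq] at hp hp'
      have := hle p hp.1
      have := hle p' hp'.1
      ext <;> omega
  rw [nsmul_eq_mul]
  gcongr
  · exact hg d
  · exact_mod_cast hcard.trans (by rw [Nat.card_Icc]; omega)

lemma sum_Icc_inv_le_one_add_log {a b : ℕ} (ha : 1 ≤ a) (hab : a ≤ b) :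
    ∑ d ∈ Icc a b, (d : ℝ)⁻¹ ≤ 1 + log b - log a := by
  obtain ⟨c, rfl⟩ : ∃ c, a = c + 1 := ⟨a - 1, by omega⟩
  have hsplit : ∑ d ∈ Icc 1 c, (d : ℝ)⁻¹ + ∑ d ∈ Icc (c + 1) b, (d : ℝ)⁻¹ = harmonic b := by
    have hIoc : ∀ n, Icc 1 n = Ioc 0 n := Icc_add_one_left_eq_Ioc 0
    rw [harmonic_eq_sum_Icc, hIoc, hIoc, Icc_add_one_left_eq_Ioc,
      sum_Ioc_consecutive _ c.zero_le (by omega)]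
    push_cast
    rfl
  have hlow := log_add_one_le_harmonic c
  rw [harmonic_eq_sum_Icc] at hlow
  push_cast at hlow hsplit ⊢
  linarith [harmonic_le_one_add_log b]

lemma card_filter_fst_lt_or_sub_snd_lt_le (n m : ℕ) :
    #{p ∈ range (n + 1) ×ˢ range (n + 1) | p.1 < m ∨ n - p.2 < m} ≤ 2 * m * (n + 1) := by
  have hfst : #{i ∈ range (n + 1) | i < m} ≤ m :=
    (card_le_card fun i hi => by simp only [mem_filter, mem_range] at hi ⊢; exact hi.2).trans
      (card_range m).le
  have hsnd : #{j ∈ range (n + 1) | n - j < m} ≤ m :=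
    (card_le_card fun j hj => by simp only [mem_filter, mem_range, mem_Ico] at hj ⊢; omega).trans
      (show #(Ico (n + 1 - m) (n + 1)) ≤ m by rw [Nat.card_Ico]; omega)
  rw [filter_or, filter_product_left (· < m), filter_product_right (n - · < m)]
  refine (card_union_le _ _).trans ?_
  rw [card_product, card_product, card_range]
  nlinarith

lemma add_one_le_natCast_of_one_le_log {N : ℕ} (hN : 1 ≤ log N) : log N + 1 ≤ N := by
  have hN0 : (0 : ℝ) < N := by
    rcases Nat.eq_zero_or_pos N with h | h
    · simp [h] at hN; linarith
    · exact_mod_cast h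
  linarith [log_le_sub_one_of_pos hN0]

lemma log_natCast_add_one_le {N : ℕ} (hN : 1 ≤ log N) : log (N + 1) ≤ log N + 1 := by
  have hN1 : (1 : ℝ) ≤ N := by linarith [add_one_le_natCast_of_one_le_log hN]
  calc log (N + 1) ≤ log (2 * N) := log_le_log (by positivity) (by linarith)
    _ = log 2 + log N := log_mul two_ne_zero (by positivity)
    _ ≤ log N + 1 := by linarith [log_two_lt_d9]

lemma le_two_mul_div_log_of_sqrt_le {u : ℕ → ℝ} {A : ℝ} (hA : ∀ n : ℕ, log n * u n ≤ A) {N i : ℕ}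
    (hN : 1 < N) (hi : √N ≤ i) : u i ≤ 2 * A / log N := by
  have hA0 : 0 ≤ A := by simpa using hA 0
  have hL : 0 < log N := log_pos (by exact_mod_cast hN)
  have hlog : log N / 2 ≤ log i := by
    calc log N / 2 = log √N := (log_sqrt (Nat.cast_nonneg N)).symm
      _ ≤ log i := log_le_log (by positivity) hi
  calc u i ≤ A / log i := by rw [le_div_iff₀ (by linarith)]; linarith [hA i]
    _ ≤ A / (log N / 2) := by gcongr
    _ = 2 * A / log N := by ring

/-- The pairs `(i, j)` summed over: `i ≤ N/2 ≤ j ≤ N + 1` with `j - i ≥ N / log N`, i.e. a long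
gap of the renewal process straddling `N/2`. -/
noncomputable def longGaps (N : ℕ) : Finset (ℕ × ℕ) :=
  (range (N + 2) ×ˢ range (N + 2)).filter
    (fun p => (p.1 : ℝ) ≤ N / 2 ∧ (N : ℝ) / 2 ≤ p.2 ∧ (N : ℝ) / log N ≤ (p.2 : ℝ) - p.1)

lemma div_log_le_sub_of_mem_longGaps {N : ℕ} {p : ℕ × ℕ} (hp : p ∈ longGaps N) :
    (N : ℝ) / log N ≤ (p.2 - p.1 : ℕ) := by
  simp only [longGaps, mem_filter] at hp
  have hle : p.1 ≤ p.2 := by exact_mod_cast hp.2.1.trans hp.2.2.1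
  rw [Nat.cast_sub hle]
  exact hp.2.2.2

lemma sum_apply_sub_longGaps_le {q : ℕ → ℝ} (hq0 : ∀ n, 0 ≤ q n) {K : ℝ}
    (hK : ∀ d : ℕ, (d : ℝ) ^ 2 * q d ≤ K) {N : ℕ} (hN : 1 ≤ log N) :
    ∑ p ∈ longGaps N, q (p.2 - p.1) ≤ 2 * K * (2 + log (log N)) := by
  set T := (N : ℝ) / log N
  set a := ⌈T⌉₊
  have hK0 : 0 ≤ K := by simpa using hK 0
  have hLN := add_one_le_natCast_of_one_le_log hN
  have hL0 : 0 < log N := by linarith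
  have hT1 : 1 ≤ T := by rw [le_div_iff₀ hL0]; linarith
  have ha1 : 1 ≤ a := Nat.one_le_ceil_iff.2 (by linarith)
  have haN : a ≤ N + 1 := by
    have : a ≤ N := Nat.ceil_le.2 (div_le_self (by linarith) hN)
    omega
  have himage : (longGaps N).image (fun p => p.2 - p.1) ⊆ Icc a (N + 1) := by
    intro d hd
    obtain ⟨p, hp, rfl⟩ := mem_image.1 hd
    have := (mem_filter.1 hp).1
    rw [mem_product, mem_range, mem_range] at this
    exact mem_Icc.2 ⟨Nat.ceil_le.2 (div_log_le_sub_of_mem_longGaps hp), by omega⟩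
  have hterm (d : ℕ) (hd : d ∈ Icc a (N + 1)) : ((d : ℝ) + 1) * q d ≤ 2 * K * (d : ℝ)⁻¹ := by
    have hd1 : (1 : ℝ) ≤ d := by exact_mod_cast ha1.trans (mem_Icc.1 hd).1
    calc ((d : ℝ) + 1) * q d ≤ 2 * ((d : ℝ) ^ 2 * q d) / d := by
          rw [le_div_iff₀ (by linarith)]
          nlinarith [mul_nonneg (mul_nonneg (hq0 d) (by linarith : (0 : ℝ) ≤ d)) (sub_nonneg.2 hd1)]
      _ ≤ 2 * K / d := by gcongr; exact hK d
      _ = 2 * K * (d : ℝ)⁻¹ := div_eq_mul_inv _ _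
  have hlogs : log (N + 1) - log a ≤ 1 + log (log N) := by
    have h := log_le_log (by linarith) (Nat.le_ceil T)
    rw [log_div (by linarith) hL0.ne'] at h
    linarith [log_natCast_add_one_le hN]
  calc ∑ p ∈ longGaps N, q (p.2 - p.1)
      ≤ ∑ d ∈ (longGaps N).image (fun p : ℕ × ℕ => p.2 - p.1), ((d : ℝ) + 1) * q d :=
        sum_sub_le_sum_image_succ_mul hq0 (x := N / 2) fun p hp => by
          simp only [longGaps, mem_filter] at hp; exact ⟨hp.2.1, hp.2.2.1⟩
    _ ≤ ∑ d ∈ Icc a (N + 1), ((d : ℝ) + 1) * q d :=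
        sum_le_sum_of_subset_of_nonneg himage fun d _ _ => by positivity [hq0 d]
    _ ≤ ∑ d ∈ Icc a (N + 1), 2 * K * (d : ℝ)⁻¹ := sum_le_sum hterm
    _ = 2 * K * ∑ d ∈ Icc a (N + 1), (d : ℝ)⁻¹ := by rw [mul_sum]
    _ ≤ 2 * K * (1 + log ((N + 1 : ℕ) : ℝ) - log a) := by
        gcongr; exact sum_Icc_inv_le_one_add_log ha1 haN
    _ ≤ 2 * K * (2 + log (log N)) := by push_cast; gcongr; linarith

lemma sum_longGaps_bulk_le {q u : ℕ → ℝ} (hq0 : ∀ n, 0 ≤ q n) (hu0 : ∀ n, 0 ≤ u n) {K A : ℝ}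
    (hK : ∀ d : ℕ, (d : ℝ) ^ 2 * q d ≤ K) (hA : ∀ n : ℕ, log n * u n ≤ A) {N m : ℕ}
    (hN : 1 ≤ log N) (hm : √N ≤ m) :
    ∑ p ∈ longGaps N with ¬(p.1 < m ∨ N + 1 - p.2 < m), u p.1 * q (p.2 - p.1) * u (N + 1 - p.2)
      ≤ (2 * A / log N) ^ 2 * (2 * K * (2 + log (log N))) := by
  have hN1 : 1 < N := by
    exact_mod_cast (by linarith [add_one_le_natCast_of_one_le_log hN] : (1 : ℝ) < N)
  have hu (n : ℕ) (hn : m ≤ n) : u n ≤ 2 * A / log N :=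
    le_two_mul_div_log_of_sqrt_le hA hN1 (hm.trans (by exact_mod_cast hn))
  calc _ ≤ ∑ p ∈ longGaps N with ¬(p.1 < m ∨ N + 1 - p.2 < m),
          (2 * A / log N) ^ 2 * q (p.2 - p.1) := by
        refine sum_le_sum fun p hp => ?_
        simp only [mem_filter, not_or, not_lt] at hp
        have := mul_le_mul (hu _ hp.2.1) (hu _ hp.2.2) (hu0 _) ((hu0 _).trans (hu _ hp.2.1))
        nlinarith [hq0 (p.2 - p.1)]
    _ ≤ (2 * A / log N) ^ 2 * ∑ p ∈ longGaps N, q (p.2 - p.1) := by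
        rw [← mul_sum]
        gcongr
        · exact fun p _ _ => hq0 _
        · exact filter_subset _ _
    _ ≤ (2 * A / log N) ^ 2 * (2 * K * (2 + log (log N))) := by
        gcongr
        exact sum_apply_sub_longGaps_le hq0 hK hN

lemma apply_sub_le_of_mem_longGaps {q : ℕ → ℝ} (hq0 : ∀ n, 0 ≤ q n) {K : ℝ}
    (hK : ∀ d : ℕ, (d : ℝ) ^ 2 * q d ≤ K) {N : ℕ} (hN : 1 ≤ log N) {p : ℕ × ℕ}
    (hp : p ∈ longGaps N) : q (p.2 - p.1) ≤ K * (log N / N) ^ 2 := by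
  have hT : 0 < (N : ℝ) / log N := by
    have := add_one_le_natCast_of_one_le_log hN
    exact div_pos (by linarith) (by linarith)
  have : q (p.2 - p.1) * ((N : ℝ) / log N) ^ 2 ≤ K :=
    (mul_le_mul_of_nonneg_left (pow_le_pow_left₀ hT.le (div_log_le_sub_of_mem_longGaps hp) 2)
      (hq0 _)).trans (by linarith [hK (p.2 - p.1)])
  rwa [← le_div_iff₀ (pow_pos hT 2), div_eq_mul_inv, ← inv_pow, inv_div] at this

lemma sum_longGaps_thin_le {q u : ℕ → ℝ} (hq0 : ∀ n, 0 ≤ q n) (hu0 : ∀ n, 0 ≤ u n) {K M : ℝ}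
    (hK : ∀ d : ℕ, (d : ℝ) ^ 2 * q d ≤ K) (hM : ∀ n, u n ≤ M) {N : ℕ} (hN : 1 ≤ log N) (m : ℕ) :
    ∑ p ∈ longGaps N with (p.1 < m ∨ N + 1 - p.2 < m), u p.1 * q (p.2 - p.1) * u (N + 1 - p.2)
      ≤ 2 * m * (N + 2) * (M ^ 2 * (K * (log N / N) ^ 2)) := by
  have hM0 : 0 ≤ M := (hu0 0).trans (hM 0)
  have hK0 : 0 ≤ K := by simpa using hK 0
  have hterm (p : ℕ × ℕ) (hp : p ∈ longGaps N) :
      u p.1 * q (p.2 - p.1) * u (N + 1 - p.2) ≤ M ^ 2 * (K * (log N / N) ^ 2) := by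
    have hq := apply_sub_le_of_mem_longGaps hq0 hK hN hp
    calc u p.1 * q (p.2 - p.1) * u (N + 1 - p.2) = u p.1 * u (N + 1 - p.2) * q (p.2 - p.1) := by
          ring
      _ ≤ (M * M) * (K * (log N / N) ^ 2) :=
          mul_le_mul (mul_le_mul (hM _) (hM _) (hu0 _) hM0) hq (hq0 _) (by positivity)
      _ = M ^ 2 * (K * (log N / N) ^ 2) := by ring
  have hcard : #{p ∈ longGaps N | p.1 < m ∨ N + 1 - p.2 < m} ≤ 2 * m * (N + 2) :=
    (card_le_card (filter_subset_filter _ (filter_subset _ _))).trans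
      (card_filter_fst_lt_or_sub_snd_lt_le (N + 1) m)
  calc _ ≤ ∑ p ∈ longGaps N with (p.1 < m ∨ N + 1 - p.2 < m), M ^ 2 * (K * (log N / N) ^ 2) :=
        sum_le_sum fun p hp => hterm p (mem_filter.1 hp).1
    _ ≤ 2 * m * (N + 2) * (M ^ 2 * (K * (log N / N) ^ 2)) := by
        rw [sum_const, nsmul_eq_mul]
        gcongr
        exact_mod_cast hcard

lemma log_mul_sum_longGaps_le {q u : ℕ → ℝ} (hq0 : ∀ n, 0 ≤ q n) (hu0 : ∀ n, 0 ≤ u n)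
    {K M A : ℝ} (hK : ∀ d : ℕ, (d : ℝ) ^ 2 * q d ≤ K) (hM : ∀ n, u n ≤ M)
    (hA : ∀ n : ℕ, log n * u n ≤ A) {N : ℕ} (hN : 1 ≤ log N) :
    log (N + 1) * ∑ p ∈ longGaps N, u p.1 * q (p.2 - p.1) * u (N + 1 - p.2) ≤
      16 * K * A ^ 2 * ((2 + log (log N)) / log N) + 16 * K * M ^ 2 * (log N ^ 3 / √N) := by
  set L := log N
  have hLN := add_one_le_natCast_of_one_le_log hN
  have hN0 : (0 : ℝ) < N := by linarith
  have hsqrt : √N * √N = N := mul_self_sqrt hN0.le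
  have hm : (⌈√N⌉₊ : ℝ) * (N + 2) / N ^ 2 ≤ 4 / √N := by
    have hsqrt1 : 1 ≤ √N := one_le_sqrt.2 (by linarith)
    have hm : (⌈√N⌉₊ : ℝ) ≤ 2 * √N := by linarith [Nat.ceil_lt_add_one (sqrt_nonneg (N : ℝ))]
    rw [div_le_div_iff₀ (pow_pos hN0 2) (sqrt_pos.2 hN0)]
    nlinarith [mul_le_mul hm (by linarith : (N : ℝ) + 2 ≤ 2 * N) (by positivity) (by positivity)]
  have hterm0 (p : ℕ × ℕ) : 0 ≤ u p.1 * q (p.2 - p.1) * u (N + 1 - p.2) :=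
    mul_nonneg (mul_nonneg (hu0 _) (hq0 _)) (hu0 _)
  have hK0 : 0 ≤ K := by simpa using hK 0
  have hlogL : 0 ≤ log L := log_nonneg hN
  rw [← sum_filter_not_add_sum_filter _ (fun p => p.1 < ⌈√N⌉₊ ∨ N + 1 - p.2 < ⌈√N⌉₊)]
  calc _ ≤ 2 * L * ((2 * A / L) ^ 2 * (2 * K * (2 + log L)) +
          2 * ⌈√N⌉₊ * (N + 2) * (M ^ 2 * (K * (L / N) ^ 2))) :=
        mul_le_mul (by linarith [log_natCast_add_one_le hN])
          (add_le_add (sum_longGaps_bulk_le hq0 hu0 hK hA hN (Nat.le_ceil _))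
            (sum_longGaps_thin_le hq0 hu0 hK hM hN _))
          (add_nonneg (sum_nonneg fun p _ => hterm0 p) (sum_nonneg fun p _ => hterm0 p))
          (by positivity)
    _ = 16 * K * A ^ 2 * ((2 + log L) / L) +
          4 * K * M ^ 2 * L ^ 3 * (⌈√N⌉₊ * (N + 2) / N ^ 2) := by
        field_simp
        ring
    _ ≤ 16 * K * A ^ 2 * ((2 + log L) / L) + 4 * K * M ^ 2 * L ^ 3 * (4 / √N) := by gcongr
    _ = _ := by ring

lemma tendsto_log_log_div_log_add_log_pow_div_sqrt (a b : ℝ) :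
    Tendsto (fun N : ℕ => a * ((2 + log (log N)) / log N) + b * (log N ^ 3 / √N)) atTop (𝓝 0) := by
  have h1 : Tendsto (fun y : ℝ => (2 + log y) / y) atTop (𝓝 0) := by
    simpa [add_div] using (tendsto_const_nhds (x := (2 : ℝ))).div_atTop tendsto_id |>.add
      isLittleO_log_id_atTop.tendsto_div_nhds_zero
  have h2 : Tendsto (fun x : ℝ => log x ^ 3 / √x) atTop (𝓝 0) := by
    refine (isLittleO_log_rpow_rpow_atTop 3 one_half_pos).tendsto_div_nhds_zero.congr fun x => ?_
    rw [← sqrt_eq_rpow]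
    norm_cast
  have := (((h1.comp tendsto_log_atTop).const_mul a).add (h2.const_mul b)).comp
    (tendsto_natCast_atTop_atTop (R := ℝ))
  simpa only [mul_zero, add_zero, Function.comp_def] using this

lemma tendsto_log_mul_sum_longGaps {q u : ℕ → ℝ} (hq0 : ∀ n, 0 ≤ q n) (hu0 : ∀ n, 0 ≤ u n)
    (hK : BddAbove (Set.range fun d : ℕ => (d : ℝ) ^ 2 * q d)) (hM : BddAbove (Set.range u))
    (hA : BddAbove (Set.range fun n : ℕ => log n * u n)) :
    Tendsto (fun N : ℕ => log (N + 1) *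
      ∑ p ∈ longGaps N, u p.1 * q (p.2 - p.1) * u (N + 1 - p.2)) atTop (𝓝 0) := by
  obtain ⟨K, hK⟩ := hK
  obtain ⟨M, hM⟩ := hM
  obtain ⟨A, hA⟩ := hA
  refine squeeze_zero' (Eventually.of_forall fun N => ?_) ?_
    (tendsto_log_log_div_log_add_log_pow_div_sqrt (16 * K * A ^ 2) (16 * K * M ^ 2))
  · exact mul_nonneg (log_nonneg (by linarith [(Nat.cast_nonneg N : (0 : ℝ) ≤ N)]))
      (sum_nonneg fun p _ => mul_nonneg (mul_nonneg (hu0 _) (hq0 _)) (hu0 _))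
  · filter_upwards [(tendsto_log_atTop.comp tendsto_natCast_atTop_atTop).eventually_ge_atTop 1]
      with N hN
    exact log_mul_sum_longGaps_le hq0 hu0 (fun d => hK ⟨d, rfl⟩) (fun n => hM ⟨n, rfl⟩)
      (fun n => hA ⟨n, rfl⟩) hN

lemma tendsto_zero_of_tendsto_log_mul {u : ℕ → ℝ} {c : ℝ}
    (h : Tendsto (fun n : ℕ => log n * u n) atTop (𝓝 c)) : Tendsto u atTop (𝓝 0) := by
  have hlog := tendsto_log_atTop.comp (tendsto_natCast_atTop_atTop (R := ℝ))
  have h' := h.mul hlog.inv_tendsto_atTop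
  rw [mul_zero] at h'
  refine h'.congr' ?_
  filter_upwards [hlog.eventually_gt_atTop 0] with n hn
  simp only [Function.comp_apply, Pi.inv_apply] at hn ⊢
  field_simp

theorem stmt_8_general (q : ℕ → ℝ) (hq0 : ∀ n, 0 ≤ q n)
    (C : ℝ) (hC : 0 < C)
    (hqa : Tendsto (fun n : ℕ => (n : ℝ) ^ 2 * q n) atTop (nhds C))
    (u : ℕ → ℝ) (hu : ∀ n, u n = ∑' k : ℕ, convPow q k n)
    (hua : Tendsto (fun n : ℕ => Real.log n * u n) atTop (nhds (1 / C))) :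
    Tendsto (fun N : ℕ =>
      (∑ p ∈ (Finset.range (N + 2) ×ˢ Finset.range (N + 2)).filter
          (fun p => (p.1 : ℝ) ≤ N / 2 ∧ (N : ℝ) / 2 ≤ p.2 ∧
            (N : ℝ) / Real.log N ≤ (p.2 : ℝ) - p.1),
        u p.1 * q (p.2 - p.1) * u (N + 1 - p.2)) / u (N + 1))
      atTop (nhds 0) := by
  have hu0 (n : ℕ) : 0 ≤ u n := hu n ▸ tsum_nonneg fun k => convPow_nonneg hq0 k n
  have hnum := tendsto_log_mul_sum_longGaps hq0 hu0 hqa.bddAbove_range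
    (tendsto_zero_of_tendsto_log_mul hua).bddAbove_range hua.bddAbove_range
  have hden : Tendsto (fun N : ℕ => log (N + 1) * u (N + 1)) atTop (𝓝 (1 / C)) := by
    simpa [Function.comp_def] using hua.comp (tendsto_add_atTop_nat 1)
  have h := hnum.div hden (by positivity)
  rw [zero_div] at h
  refine h.congr' ?_
  filter_upwards [eventually_ge_atTop 1] with N hN
  exact mul_div_mul_left _ _ (log_pos (by norm_cast; omega)).ne'

/-- Let `q` be a probability mass function on `ℕ` with `q(n) ~ C/n²`, and let
`u(n) = ∑_{k ≥ 0} q^{*k}(n)` be the renewal mass function, so that `u(n) ~ 1/(C log n)`.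
Then `∑_{0 ≤ i ≤ N/2 ≤ j ≤ N+1, j-i ≥ N/log N} u(i) q(j-i) u(N+1-j) / u(N+1) → 0`. -/
theorem stmt_8 (q : ℕ → ℝ) (hq0 : ∀ n, 0 ≤ q n) (hq1 : ∀ n, q n ≤ 1) (hqsum : HasSum q 1)
    (C : ℝ) (hC : 0 < C)
    (hqa : Tendsto (fun n : ℕ => (n : ℝ) ^ 2 * q n) atTop (nhds C))
    (u : ℕ → ℝ) (hu : ∀ n, u n = ∑' k : ℕ, convPow q k n)
    (hua : Tendsto (fun n : ℕ => Real.log n * u n) atTop (nhds (1 / C))) :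
    Tendsto (fun N : ℕ =>
      (∑ p ∈ (Finset.range (N + 2) ×ˢ Finset.range (N + 2)).filter
          (fun p => (p.1 : ℝ) ≤ N / 2 ∧ (N : ℝ) / 2 ≤ p.2 ∧
            (N : ℝ) / Real.log N ≤ (p.2 : ℝ) - p.1),
        u p.1 * q (p.2 - p.1) * u (N + 1 - p.2)) / u (N + 1))
      atTop (nhds 0) :=
  stmt_8_general q hq0 C hC hqa u hu hua
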